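/- The number of n×n real matrices with entries in {0,1} all of whose principal minors are 1 equals the number of acyclic digraphs on n labeled vertices. -/

import Mathlib

/-!
If every principal minor of `A` is `1`, then `A` has the same characteristic polynomial as the
identity, since its coefficients are signed sums of principal minors; by Cayley–Hamilton `A - 1`
is nilpotent. For a `0/1` matrix with unit diagonal, `A - 1` is entrywise nonnegative, and a
directed cycle through `i` in its support would make the `(i, i)` entry of every power of some
`(A - 1) ^ k` positive. Conversely, for an acyclic digraph `G`, only the identity permutation
contributes to the Leibniz expansion of a principal minor of `1 + adj G`, since the moved points
of any other contributing permutation would trace out a cycle. So `A ↦ support of A - 1` is a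
bijection between the two sets.
-/

open Matrix

/-- The principal minor of `A` indexed by the subset `s` (rows and columns). -/
def pminor {m : Type*} [Fintype m] [DecidableEq m] {R : Type*} [CommRing R]
    (A : Matrix m m R) (s : Finset m) : R :=
  (A.submatrix (fun i : s => (i : m)) (fun j : s => (j : m))).det


/-- Adjacency matrix over `ZMod 2` of a digraph on `n` labeled vertices. -/
def adjMat {n : ℕ} (G : Fin n → Fin n → Bool) : Matrix (Fin n) (Fin n) (ZMod 2) :=
  Matrix.of fun i j => if G i j then 1 else 0

/-- A digraph is acyclic if it has no directed cycle (of any length). -/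
def IsAcyclicDigraph {n : ℕ} (G : Fin n → Fin n → Bool) : Prop :=
  ∀ i, ¬ Relation.TransGen (fun a b => G a b = true) i i

open Polynomial Relation

namespace Equiv.Perm

theorem exists_transGen_self {α : Type*} [Finite α] {σ : Perm α} (hσ : σ ≠ 1)
    {r : α → α → Prop} (hr : ∀ x, σ x ≠ x → r (σ x) x) : ∃ i, TransGen r i i := by
  obtain ⟨i, hi⟩ : ∃ i, σ i ≠ i := by
    by_contra! h
    exact hσ (Equiv.ext h)
  have hpow : ∀ k : ℕ, TransGen r ((σ ^ (k + 1)) i) i := by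
    intro k
    induction k with
    | zero => simpa using TransGen.single (hr i hi)
    | succ k ih =>
      have hmoved : σ ((σ ^ (k + 1)) i) ≠ (σ ^ (k + 1)) i :=
        (apply_pow_apply_eq_iff σ (k + 1)).not.mpr hi
      rw [pow_succ', Perm.mul_apply]
      exact TransGen.head (hr _ hmoved) ih
  obtain ⟨k, hk⟩ : ∃ k, orderOf σ = k + 1 := Nat.exists_eq_add_one.mpr (orderOf_pos σ)
  have := hpow k
  rw [← hk, pow_orderOf_eq_one, Perm.one_apply] at this
  exact ⟨i, this⟩

end Equiv.Perm

namespace Matrix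

variable {m R : Type*} [Fintype m] [DecidableEq m]

section CommRing

variable [CommRing R]

theorem det_eq_prod_diag_of_acyclic (M : Matrix m m R) {r : m → m → Prop}
    (hr : ∀ i, ¬ TransGen r i i) (hM : ∀ i j, i ≠ j → M i j ≠ 0 → r i j) :
    M.det = ∏ i, M i i := by
  rw [det_apply, Finset.sum_eq_single 1 _ (by simp)]
  · simp
  · intro σ _ hσ
    obtain ⟨i, hi⟩ : ∃ i, M (σ i) i = 0 := by
      by_contra! h
      obtain ⟨i, hi⟩ := σ.exists_transGen_self hσ fun x hx => hM _ _ hx (h x)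
      exact hr i hi
    rw [Finset.prod_eq_zero (Finset.mem_univ i) (f := fun j => M (σ j) j) hi, smul_zero]

theorem pminor_singleton (A : Matrix m m R) (i : m) : pminor A {i} = A i i := by
  rw [pminor, det_unique]
  rfl

theorem pminor_one (s : Finset m) : pminor (1 : Matrix m m R) s = 1 := by
  rw [pminor, submatrix_one _ Subtype.val_injective, det_one]

theorem charpoly_eq_of_pminor_eq {A B : Matrix m m R}
    (h : ∀ s, pminor A s = pminor B s) : A.charpoly = B.charpoly := by
  nontriviality R
  ext j
  rcases le_or_gt j (Fintype.card m) with hj | hj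
  · obtain ⟨k, hk, rfl⟩ : ∃ k ≤ Fintype.card m, j = Fintype.card m - k :=
      ⟨Fintype.card m - j, Nat.sub_le _ _, (Nat.sub_sub_self hj).symm⟩
    simp only [charpoly_coeff_eq_sum_minors _ _ hk]
    exact congrArg _ (Finset.sum_congr rfl fun s _ => h s)
  · rw [coeff_eq_zero_of_natDegree_lt (by rwa [charpoly_natDegree_eq_dim]),
      coeff_eq_zero_of_natDegree_lt (by rwa [charpoly_natDegree_eq_dim])]

theorem isNilpotent_sub_one_of_pminor_eq_one {A : Matrix m m R}
    (h : ∀ s, pminor A s = 1) : IsNilpotent (A - 1) := by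
  have hchar : A.charpoly = (X - 1) ^ Fintype.card m := by
    rw [← charpoly_one]
    exact charpoly_eq_of_pminor_eq fun s => by rw [h, pminor_one]
  refine ⟨Fintype.card m, ?_⟩
  simpa [hchar] using aeval_self_charpoly A

end CommRing

section Nonneg

variable [Semiring R] [PartialOrder R] [IsStrictOrderedRing R] {B : Matrix m m R}

theorem pow_succ_apply_pos (hB : ∀ i j, 0 ≤ B i j) {a : ℕ} {i j l : m}
    (hij : 0 < (B ^ a) i j) (hjl : 0 < B j l) : 0 < (B ^ (a + 1)) i l := by
  rw [pow_succ, mul_apply]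
  exact Finset.sum_pos' (fun x _ => mul_nonneg (pow_apply_nonneg hB a i x) (hB x l))
    ⟨j, Finset.mem_univ j, mul_pos hij hjl⟩

theorem exists_pow_apply_pos_of_transGen (hB : ∀ i j, 0 ≤ B i j) {i j : m}
    (h : TransGen (fun i j => 0 < B i j) i j) : ∃ k, 0 < (B ^ (k + 1)) i j := by
  induction h with
  | single hij => exact ⟨0, by simpa using hij⟩
  | tail _ hjl ih =>
    obtain ⟨k, hk⟩ := ih
    exact ⟨k + 1, pow_succ_apply_pos hB hk hjl⟩

theorem not_isNilpotent_of_transGen_self (hB : ∀ i j, 0 ≤ B i j) {i : m}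
    (h : TransGen (fun i j => 0 < B i j) i i) : ¬ IsNilpotent B := by
  obtain ⟨k, hk⟩ := exists_pow_apply_pos_of_transGen hB h
  set C := B ^ (k + 1)
  have hC : ∀ p, 0 < (C ^ p) i i := by
    intro p
    induction p with
    | zero => simp
    | succ p ih => exact pow_succ_apply_pos (pow_apply_nonneg hB (k + 1)) ih hk
  rintro ⟨p, hp⟩
  have hCp : C ^ p = 0 := by rw [← pow_mul, mul_comm, pow_mul, hp, zero_pow (by omega)]
  simpa [hCp] using hC p

end Nonneg

end Matrix

section Digraph

variable {n : ℕ} {R : Type*}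

def matrixOfDigraph [Zero R] [One R] (G : Fin n → Fin n → Bool) : Matrix (Fin n) (Fin n) R :=
  Matrix.of fun i j => if i = j ∨ G i j then 1 else 0

def digraphOfMatrix [One R] [DecidableEq R] (A : Matrix (Fin n) (Fin n) R) :
    Fin n → Fin n → Bool :=
  fun i j => decide (i ≠ j ∧ A i j = 1)

theorem pminor_matrixOfDigraph_eq_one [CommRing R] {G : Fin n → Fin n → Bool}
    (hG : IsAcyclicDigraph G) (s : Finset (Fin n)) :
    pminor (matrixOfDigraph G : Matrix (Fin n) (Fin n) R) s = 1 := by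
  rw [pminor, det_eq_prod_diag_of_acyclic _ (r := fun a b : s => G a b = true)]
  · simp [matrixOfDigraph]
  · exact fun i hi => hG i (hi.lift Subtype.val fun _ _ => id)
  · intro i j hij hne
    by_contra hG
    exact hne (if_neg (not_or.mpr ⟨Subtype.coe_injective.ne hij, hG⟩))

theorem isAcyclicDigraph_digraphOfMatrix [CommRing R] [PartialOrder R] [IsStrictOrderedRing R]
    [DecidableEq R] {A : Matrix (Fin n) (Fin n) R} (h01 : ∀ i j, A i j = 0 ∨ A i j = 1)
    (hA : ∀ s, pminor A s = 1) : IsAcyclicDigraph (digraphOfMatrix A) := by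
  intro i hcycle
  have hdiag : ∀ i, A i i = 1 := fun i => (pminor_singleton A i).symm.trans (hA {i})
  have hnonneg : ∀ i j, 0 ≤ (A - 1) i j := by
    intro i j
    rcases eq_or_ne i j with rfl | hij
    · simp [hdiag]
    · rcases h01 i j with h | h <;> simp [hij, h]
  refine not_isNilpotent_of_transGen_self hnonneg (TransGen.mono ?_ _ _ hcycle)
    (isNilpotent_sub_one_of_pminor_eq_one hA)
  intro a b hab
  simp only [digraphOfMatrix, decide_eq_true_eq] at hab
  simp [hab.1, hab.2]

theorem digraphOfMatrix_matrixOfDigraph [Zero R] [One R] [NeZero (1 : R)] [DecidableEq R]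
    {G : Fin n → Fin n → Bool} (hG : ∀ i, G i i = false) :
    digraphOfMatrix (matrixOfDigraph G : Matrix (Fin n) (Fin n) R) = G := by
  ext i j
  rcases eq_or_ne i j with rfl | hij
  · simp [digraphOfMatrix, hG]
  · cases h : G i j <;> simp [digraphOfMatrix, matrixOfDigraph, hij, h]

theorem matrixOfDigraph_digraphOfMatrix [Zero R] [One R] [NeZero (1 : R)] [DecidableEq R]
    {A : Matrix (Fin n) (Fin n) R} (h01 : ∀ i j, A i j = 0 ∨ A i j = 1)
    (hdiag : ∀ i, A i i = 1) : matrixOfDigraph (digraphOfMatrix A) = A := by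
  ext i j
  rcases eq_or_ne i j with rfl | hij
  · simp [matrixOfDigraph, hdiag]
  · rcases h01 i j with h | h <;> simp [digraphOfMatrix, matrixOfDigraph, hij, h]

end Digraph

theorem stmt_5 {n : ℕ} :
    Nat.card {A : Matrix (Fin n) (Fin n) ℝ //
        (∀ i j, A i j = 0 ∨ A i j = 1) ∧ ∀ s : Finset (Fin n), pminor A s = 1} =
    Nat.card {G : Fin n → Fin n → Bool //
        (∀ i, G i i = false) ∧ IsAcyclicDigraph G} :=
  Nat.card_congr
    { toFun := fun A => ⟨digraphOfMatrix A.1, fun i => by simp [digraphOfMatrix],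
        isAcyclicDigraph_digraphOfMatrix A.2.1 A.2.2⟩
      invFun := fun G => ⟨matrixOfDigraph G.1, fun i j => (ite_eq_or_eq _ _ _).symm,
        pminor_matrixOfDigraph_eq_one G.2.2⟩
      left_inv := fun A => Subtype.ext <| matrixOfDigraph_digraphOfMatrix A.2.1 fun i =>
        (pminor_singleton A.1 i).symm.trans (A.2.2 {i})
      right_inv := fun G => Subtype.ext (digraphOfMatrix_matrixOfDigraph G.2.1) }
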